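/- arXiv:2310.00535 — 2 statements merged into one kernel-verified Lean document; each statement's English description precedes it below -/
import Mathlib

section
/- Let g(y) := (1 - e^{-y^2})/y for y > 0 (with g(0) := 0). Then for all y ≥ 0, g(y) ≤ 1/√2. -/
noncomputable def g (y : ℝ) : ℝ := if y = 0 then 0 else (1 - Real.exp (-y^2)) / y

/-!
Keeping only the first term of the series `log ((1 + u) / (1 - u)) = 2 (u + u³/3 + …)` gives
the Padé bound `1 - exp (-x) ≤ 2x / (2 + x)`. With `x = y²` this bounds `g y` by `2y / (2 + y²)`,
which is at most `1 / √2` because `2 √2 y ≤ 2 + y²` (AM-GM).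
-/

open Real

lemma Real.two_mul_le_log_sub_log {u : ℝ} (hu₀ : 0 ≤ u) (hu₁ : u < 1) :
    2 * u ≤ log (1 + u) - log (1 - u) := by
  have hsum := hasSum_log_sub_log_of_abs_lt_one (abs_lt.mpr ⟨by linarith, hu₁⟩)
  simpa using le_hasSum hsum 0 fun k _ ↦ by positivity

lemma Real.one_sub_exp_neg_le {x : ℝ} (hx : 0 ≤ x) : 1 - exp (-x) ≤ 2 * x / (2 + x) := by
  rw [le_div_iff₀ (by linarith)]
  suffices 2 - x ≤ (2 + x) * exp (-x) by linarith
  rcases le_or_gt 2 x with hx2 | hx2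
  · nlinarith [exp_pos (-x)]
  · have hlog := two_mul_le_log_sub_log (u := x / 2) (by linarith) (by linarith)
    rw [← log_div (by linarith) (by linarith), mul_div_cancel₀ x two_ne_zero,
      le_log_iff_exp_le (div_pos (by linarith) (by linarith)), le_div_iff₀ (by linarith)] at hlog
    have hexp : exp (-x) * exp x = 1 := by rw [← exp_add, neg_add_cancel, exp_zero]
    nlinarith [exp_pos (-x)]

lemma two_mul_div_two_add_sq_le (y : ℝ) : 2 * y / (2 + y ^ 2) ≤ 1 / √2 := by
  have hs : 0 < √2 := by positivity
  rw [div_le_div_iff₀ (by positivity) hs]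
  nlinarith [sq_nonneg (y - √2), sq_sqrt (zero_le_two (α := ℝ))]

theorem g_le_inv_sqrt_two : ∀ y : ℝ, 0 ≤ y → g y ≤ 1 / Real.sqrt 2 := by
  intro y hy
  rcases hy.eq_or_lt with rfl | hy
  · simp [g]
  calc g y = (1 - exp (-y ^ 2)) / y := if_neg hy.ne'
    _ ≤ 2 * y ^ 2 / (2 + y ^ 2) / y := by gcongr; exact one_sub_exp_neg_le (sq_nonneg y)
    _ = 2 * y / (2 + y ^ 2) := by field_simp
    _ ≤ 1 / √2 := two_mul_div_two_add_sq_le y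
end

section
/- Let G(y) := e^{-y^2/2} ∫_0^y e^{x^2/2} dx. Then for all y ≥ 0, 0 ≤ G(y) ≤ 1. -/
noncomputable def G (y : ℝ) : ℝ :=
  Real.exp (-y^2/2) * ∫ x in (0:ℝ)..y, Real.exp (x^2/2)

private lemma cont_exp_sq : Continuous (fun x : ℝ => Real.exp (x^2/2)) := by
  continuity

private lemma hd (x : ℝ) : HasDerivAt (fun x : ℝ => Real.exp (x^2/2)) (x * Real.exp (x^2/2)) x := by
  have h1 : HasDerivAt (fun x : ℝ => x^2/2) x x := by
    simpa using ((hasDerivAt_pow 2 x).div_const 2)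
  simpa [mul_comm] using h1.exp

private lemma key (y : ℝ) (hy : 0 ≤ y) :
    (∫ x in (0:ℝ)..y, Real.exp (x^2/2)) ≤ Real.exp (y^2/2) := by
  rcases le_total y 1 with h | h
  · calc (∫ x in (0:ℝ)..y, Real.exp (x^2/2))
        ≤ ∫ _ in (0:ℝ)..y, Real.exp (y^2/2) := by
          apply intervalIntegral.integral_mono_on hy
          · exact (cont_exp_sq.intervalIntegrable _ _)
          · exact intervalIntegrable_const
          · intro x hx
            exact Real.exp_le_exp.2 (by nlinarith [hx.1, hx.2, sq_nonneg x, sq_nonneg y])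
      _ = y * Real.exp (y^2/2) := by simp
      _ ≤ Real.exp (y^2/2) := by nlinarith [Real.exp_pos (y^2/2)]
  · have hsplit : (∫ x in (0:ℝ)..y, Real.exp (x^2/2)) =
        (∫ x in (0:ℝ)..1, Real.exp (x^2/2)) + ∫ x in (1:ℝ)..y, Real.exp (x^2/2) := by
      rw [intervalIntegral.integral_add_adjacent_intervals
        (cont_exp_sq.intervalIntegrable _ _) (cont_exp_sq.intervalIntegrable _ _)]
    have h1 : (∫ x in (0:ℝ)..1, Real.exp (x^2/2)) ≤ Real.exp (1/2) := by
      calc (∫ x in (0:ℝ)..1, Real.exp (x^2/2))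
          ≤ ∫ _ in (0:ℝ)..1, Real.exp ((1:ℝ)/2) := by
            apply intervalIntegral.integral_mono_on zero_le_one
            · exact (cont_exp_sq.intervalIntegrable _ _)
            · exact intervalIntegrable_const
            · intro x hx
              exact Real.exp_le_exp.2 (by nlinarith [hx.1, hx.2])
        _ = Real.exp (1/2) := by simp
    have hftc : (∫ x in (1:ℝ)..y, x * Real.exp (x^2/2)) =
        Real.exp (y^2/2) - Real.exp ((1:ℝ)^2/2) := by
      exact intervalIntegral.integral_eq_sub_of_hasDerivAt
        (fun x _ => hd x) ((continuous_id.mul cont_exp_sq).intervalIntegrable _ _)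
    have h2 : (∫ x in (1:ℝ)..y, Real.exp (x^2/2)) ≤ Real.exp (y^2/2) - Real.exp (1/2) := by
      calc (∫ x in (1:ℝ)..y, Real.exp (x^2/2))
          ≤ ∫ x in (1:ℝ)..y, x * Real.exp (x^2/2) := by
            apply intervalIntegral.integral_mono_on h
            · exact (cont_exp_sq.intervalIntegrable _ _)
            · exact ((continuous_id.mul cont_exp_sq).intervalIntegrable _ _)
            · intro x hx
              nlinarith [Real.exp_pos (x^2/2), hx.1]
        _ = Real.exp (y^2/2) - Real.exp (1/2) := by rw [hftc]; norm_num
    rw [hsplit]; linarith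

theorem G_bounds : ∀ y : ℝ, 0 ≤ y → 0 ≤ G y ∧ G y ≤ 1 := by
  intro y hy
  constructor
  · apply mul_nonneg (Real.exp_pos _).le
    apply intervalIntegral.integral_nonneg hy
    intro x _
    exact (Real.exp_pos _).le
  · have := key y hy
    have hpos := Real.exp_pos (-y^2/2)
    calc G y ≤ Real.exp (-y^2/2) * Real.exp (y^2/2) := by
          exact mul_le_mul_of_nonneg_left this hpos.le
      _ = 1 := by rw [← Real.exp_add]; ring_nf; exact Real.exp_zero
end
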